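/- Let X be a Lindelöf (e.g. separable metric) topological space, let {U_α}_{α∈A} be an open cover of X, and for each α let μ_α be a Borel measure on U_α (viewed as a measure on X supported in U_α) such that for all α, β the restrictions of μ_α and μ_β to U_α ∩ U_β agree. Then there exists a Borel measure μ on X whose restriction to each U_α equals μ_α, and μ is σ-finite if each μ_α is finite. -/

import Mathlib

open MeasureTheory

/-- Measures on the members of an open cover of a separable metric (hence
Lindelöf) space which agree on overlaps glue to a Borel measure on the whole space, which
is σ-finite if each piece is finite. -/
theorem glue_measures_of_open_cover
    (X : Type*) [MetricSpace X] [TopologicalSpace.SeparableSpace X]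
    [MeasurableSpace X] [BorelSpace X]
    {ι : Type*} (U : ι → Set X) (hUopen : ∀ i, IsOpen (U i))
    (hcover : (⋃ i, U i) = Set.univ)
    (μ : ι → Measure X) (hsupp : ∀ i, μ i (U i)ᶜ = 0)
    (hagree : ∀ i j, ∀ s ⊆ U i ∩ U j, MeasurableSet s → μ i s = μ j s) :
    ∃ ν : Measure X, (∀ i, ∀ s ⊆ U i, MeasurableSet s → ν s = μ i s) ∧
      ((∀ i, μ i Set.univ < ⊤) → SigmaFinite ν) := by
  rcases isEmpty_or_nonempty X with hX | hX
  · refine ⟨0, fun i s hs hms => ?_, fun _ => inferInstance⟩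
    have : s = ∅ := Set.eq_empty_of_isEmpty s
    simp [this]
  haveI : SecondCountableTopology X := UniformSpace.secondCountable_of_separable X
  -- countable subcover
  obtain ⟨T, hTc, hTU⟩ := TopologicalSpace.isOpen_iUnion_countable U hUopen
  have hTne : T.Nonempty := by
    by_contra h
    rw [Set.not_nonempty_iff_eq_empty] at h
    rw [h] at hTU
    simp only [Set.mem_empty_iff_false, Set.iUnion_of_empty, Set.iUnion_empty] at hTU
    rw [hcover] at hTU
    obtain ⟨x⟩ := hX
    have : x ∈ (∅ : Set X) := hTU ▸ Set.mem_univ x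
    exact this
  obtain ⟨f, hf⟩ := Set.Countable.exists_eq_range hTc hTne
  set e : ℕ → ι := fun n => (f n : ι) with he
  have hUnion : (⋃ n, U (e n)) = Set.univ := by
    rw [← hcover, ← hTU]
    ext x
    simp only [Set.mem_iUnion]
    constructor
    · rintro ⟨n, hn⟩
      exact ⟨e n, by rw [hf]; exact ⟨n, rfl⟩, hn⟩
    · rintro ⟨i, hi, hx⟩
      rw [hf] at hi
      obtain ⟨n, rfl⟩ := hi
      exact ⟨n, hx⟩
  set V : ℕ → Set X := disjointed (fun n => U (e n)) with hV
  have hVmeas : ∀ n, MeasurableSet (V n) :=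
    MeasurableSet.disjointed (fun n => (hUopen (e n)).measurableSet)
  have hVsub : ∀ n, V n ⊆ U (e n) := fun n => disjointed_subset _ n
  have hVdisj : Pairwise (Function.onFun Disjoint V) := disjoint_disjointed _
  have hVunion : (⋃ n, V n) = Set.univ := by
    rw [hV, iUnion_disjointed, hUnion]
  set ν : Measure X := Measure.sum (fun n => (μ (e n)).restrict (V n)) with hν
  have key : ∀ i, ∀ s ⊆ U i, MeasurableSet s → ν s = μ i s := by
    intro j s hs hms
    rw [hν, Measure.sum_apply _ hms]
    have h1 : ∀ n, (μ (e n)).restrict (V n) s = μ j (s ∩ V n) := by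
      intro n
      rw [Measure.restrict_apply hms]
      exact hagree (e n) j (s ∩ V n)
        (fun x hx => ⟨hVsub n hx.2, hs hx.1⟩) (hms.inter (hVmeas n))
    simp_rw [h1]
    rw [← measure_iUnion (fun m n hmn => (hVdisj hmn).mono
        (Set.inter_subset_right) (Set.inter_subset_right))
        (fun n => hms.inter (hVmeas n))]
    rw [← Set.inter_iUnion, hVunion, Set.inter_univ]
  refine ⟨ν, key, fun hfin => ?_⟩
  refine ⟨⟨⟨V, fun _ => trivial, fun n => ?_, hVunion⟩⟩⟩
  have := key (e n) (V n) (hVsub n) (hVmeas n)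
  rw [this]
  exact lt_of_le_of_lt (measure_mono (Set.subset_univ _)) (hfin (e n))
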